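/- arXiv:1506.04962 — 5 statements merged into one kernel-verified Lean document; each statement's English description precedes it below -/
import Mathlib

section
/- Let u, d, s, m be positive integers with s > 1 and s coprime to m·d. Let v = u + d, and suppose s ≥ m·v·(u−1). Then for every element (x, y) of the group Z_{s+m·d} × Z_s, there exist nonnegative integers h < s + m·v and ℓ < s − m·(u−1) such that (x, y) = h·(1,1) + ℓ·(u,v). -/
lemma exists_ceil (z S : ℕ) (hS : 0 < S) : ∃ A : ℕ, z ≤ A * S ∧ A * S < z + S := by
  obtain ⟨S', rfl⟩ : ∃ S', S = S' + 1 := ⟨S - 1, by omega⟩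
  refine ⟨(z + S') / (S' + 1), ?_, ?_⟩ <;>
  · have h1 := Nat.div_add_mod (z + S') (S' + 1)
    have h2 := Nat.mod_lt (z + S') (show 0 < S' + 1 by omega)
    set q := (z + S') / (S' + 1) with hq
    set r := (z + S') % (S' + 1) with hr
    nlinarith [h1, h2]

lemma key (u d s m : ℕ) (hu : 0 < u) (hd : 0 < d) (hs : 1 < s) (hm : 0 < m)
    (hbig : m * (u + d) * (u - 1) ≤ s) (x t : ℕ) (hx : x < s + m * d) (ht : t < s) :
    ∃ a T ℓ : ℕ, T % s = t % s ∧ ℓ + m * a = T ∧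
      T * u ≤ x + a * (s + m * (u + d)) ∧
      x + a * (s + m * (u + d)) < T * u + (s + m * (u + d)) ∧
      ℓ < s - m * (u - 1) := by
  rcases Nat.lt_or_ge u 2 with hu1 | hu2
  · -- u = 1
    obtain rfl : u = 1 := by omega
    have hrng : m * (1 + d) = m + m * d := by ring
    rcases le_or_gt t x with hcase | hcase
    · refine ⟨0, t, t, rfl, by omega, by omega, by omega, by omega⟩
    · obtain ⟨k, hk1, hk2⟩ := exists_ceil (m - t) s (by omega)
      have hks : k * s = 0 ∨ s ≤ k * s := by
        rcases Nat.eq_zero_or_pos k with h | h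
        · exact Or.inl (by simp [h])
        · exact Or.inr (Nat.le_mul_of_pos_left s h)
      have hm1 : m ≤ t + k * s := by omega
      have hm2 : t + k * s < m + s := by rcases hks with h | h <;> omega
      refine ⟨1, t + k * s, t + k * s - m, by simp [Nat.add_mul_mod_self_right], by omega, ?_, ?_, ?_⟩
      · simp only [mul_one, one_mul]; omega
      · simp only [mul_one, one_mul]; omega
      · simp only [Nat.sub_self, Nat.mul_zero, Nat.sub_zero]; omega
  · -- u ≥ 2
    obtain ⟨w, rfl⟩ : ∃ w, u = w + 2 := ⟨u - 2, by omega⟩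
    have hsub : w + 2 - 1 = w + 1 := rfl
    rw [hsub] at hbig ⊢
    set S := s + m * (w + 2 + d) with hS
    have hS0 : 0 < S := by omega
    have b1 : m * (w + 3) ≤ m * (w + 2 + d) := Nat.mul_le_mul_left m (by omega)
    have b2 : m * (w + 2 + d) ≤ m * (w + 2 + d) * (w + 1) := Nat.le_mul_of_pos_right _ (by omega)
    have b3 : m * (w + 3) = m * (w + 1) + m * 2 := by ring
    have hL1 : m * (w + 1) ≤ s := by omega
    set L := s - m * (w + 1) with hLdef
    have hL : L + m * (w + 1) = s := by omega
    set E := s - m * (w + 2 + d) * (w + 1) with hEdef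
    have hE : E + m * (w + 2 + d) * (w + 1) = s := by omega
    have hsu : s * (w + 2) = (w + 1) * S + E := by
      have p1 : (w + 1) * S = s * (w + 1) + m * (w + 2 + d) * (w + 1) := by rw [hS]; ring
      have p2 : s * (w + 2) = s * (w + 1) + s := by ring
      omega
    have hLu : L * (w + 2) = (w + 1) * (s + m * d) + E := by
      have q1 : (L + m * (w + 1)) * (w + 2) = L * (w + 2) + m * (w + 1) * (w + 2) := by ring
      have q2 : (L + m * (w + 1)) * (w + 2) = s * (w + 2) := by rw [hL]
      have q4 : m * d * (w + 1) + m * (w + 1) * (w + 2) = m * (w + 2 + d) * (w + 1) := by ring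
      have q5 : (w + 1) * (s + m * d) = s * (w + 1) + m * d * (w + 1) := by ring
      have q6 : s * (w + 2) = s * (w + 1) + s := by ring
      omega
    have hmd : m * d ≤ m * (w + 2 + d) := Nat.mul_le_mul_left m (by omega)
    by_cases hcase : t < m ∧ x < t * (w + 2)
    · -- case (ii)
      obtain ⟨htm, hxt⟩ := hcase
      have hz1 : 1 ≤ t * (w + 2) - x := by omega
      set z := t * (w + 2) - x with hzdef
      have hz : x + z = t * (w + 2) := by omega
      obtain ⟨C, hC1, hC2⟩ := exists_ceil (z + E) S hS0
      have hC1' : 1 ≤ C := by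
        rcases Nat.eq_zero_or_pos C with h | h
        · simp [h] at hC1; omega
        · exact h
      have htu : t * (w + 2) < m * (w + 2) :=
        (Nat.mul_lt_mul_right (show 0 < w + 2 by omega)).mpr htm
      have hmu : m * (w + 2) ≤ m * (w + 2 + d) := Nat.mul_le_mul_left m (by omega)
      have hC2' : C ≤ 2 := by
        have h3 : C * S < 3 * S := by omega
        have := Nat.lt_of_mul_lt_mul_right h3
        omega
      refine ⟨w + 1 + C, t + s, t + s - m * (w + 1 + C), Nat.add_mod_right t s, ?_, ?_, ?_, ?_⟩
      all_goals {
        have hA1 : m * (w + 1 + C) = m * (w + 1) + m * C := by ring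
        have hA2 : m * C ≤ m * 2 := Nat.mul_le_mul_left m hC2'
        have hA2' : m * 1 ≤ m * C := Nat.mul_le_mul_left m hC1'
        have g1 : (t + s) * (w + 2) = t * (w + 2) + s * (w + 2) := by ring
        have g3 : (w + 1 + C) * S = (w + 1) * S + C * S := by ring
        omega }
    · -- case (i)
      rcases le_or_gt (t * (w + 2)) x with hxz | hxz
      · have htL : t < L := by
          by_contra hcon
          have h1 : L * (w + 2) ≤ t * (w + 2) := Nat.mul_le_mul_right _ (by omega)
          have h2 : 1 * (s + m * d) ≤ (w + 1) * (s + m * d) := Nat.mul_le_mul_right _ (by omega)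
          omega
        exact ⟨0, t, t, rfl, by omega, by omega, by omega, by omega⟩
      · have htm : m ≤ t := by
          by_contra hcon; exact hcase ⟨by omega, hxz⟩
        set z := t * (w + 2) - x with hzdef
        have hz : x + z = t * (w + 2) := by omega
        have hz1 : 1 ≤ z := by omega
        obtain ⟨A, hA1, hA2⟩ := exists_ceil z S hS0
        obtain ⟨B, rfl⟩ : ∃ B, A = B + 1 := by
          refine ⟨A - 1, ?_⟩
          rcases Nat.eq_zero_or_pos A with h | h
          · simp [h] at hA1; omega
          · omega
        have hBS : (B + 1) * S = B * S + S := by ring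
        have P1 : m * (B + 1) ≤ t := by
          rcases Nat.eq_zero_or_pos B with hB0 | hB0
          · subst hB0; omega
          · have f1 : B * S < t * (w + 2) := by omega
            have f2 : (m * (w + 2 + d)) * (B * S) < (m * (w + 2 + d)) * (t * (w + 2)) :=
              (Nat.mul_lt_mul_left (show 0 < m * (w + 2 + d) by positivity)).mpr f1
            have f3 : (m * (w + 2 + d)) * (t * (w + 2)) = t * (m * (w + 2 + d) * (w + 2)) := by ring
            have f4 : m * (w + 2 + d) * (w + 2) = m * (w + 2 + d) * (w + 1) + m * (w + 2 + d) := by ring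
            have f5 : m * (w + 2 + d) * (w + 2) ≤ S := by omega
            have f6 : t * (m * (w + 2 + d) * (w + 2)) ≤ t * S := Nat.mul_le_mul_left t f5
            have f7 : (m * (w + 2 + d)) * (B * S) = (m * (w + 2 + d) * B) * S := by ring
            have f8 : m * (w + 2 + d) * B < t := by
              have h9 : (m * (w + 2 + d) * B) * S < t * S := by omega
              exact Nat.lt_of_mul_lt_mul_right h9
            have f9 : 3 * (m * B) ≤ (w + 2 + d) * (m * B) := Nat.mul_le_mul_right _ (by omega)
            have f10 : (w + 2 + d) * (m * B) = m * (w + 2 + d) * B := by ring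
            have f11 : m * 1 ≤ m * B := Nat.mul_le_mul_left m hB0
            have f12 : m * (B + 1) = m * B + m * 1 := by ring
            omega
        refine ⟨B + 1, t, t - m * (B + 1), rfl, by omega, by omega, by omega, ?_⟩
        rcases lt_or_ge t L with htL | htL
        · omega
        · set D := t - L with hDdef
          have hD : L + D = t := by omega
          have h1 := Nat.div_add_mod D m
          have h2 := Nat.mod_lt D (y := m) (by omega)
          set g := D / m with hgdef
          have hg1 : m * g ≤ D := by omega
          have hg2 : D < m * g + m := by omega
          have hgw : g ≤ w := by
            have h3 : m * g < m * (w + 1) := by omega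
            have := Nat.lt_of_mul_lt_mul_left h3
            omega
          have hclaim : (L + m * g) * (w + 2) ≤ t * (w + 2) := Nat.mul_le_mul_right _ (by omega)
          have e1 : (L + m * g) * (w + 2) = L * (w + 2) + m * g * (w + 2) := by ring
          have e2 : (g + 1) * (s + m * d) ≤ (w + 1) * (s + m * d) := Nat.mul_le_mul_right _ (by omega)
          have r5 : S * g + (s + m * d) = (g + 1) * (s + m * d) + m * g * (w + 2) := by rw [hS]; ring
          have r6 : S * g + (s + m * d) ≤ t * (w + 2) := by omega
          have hzg : S * g < z := by omega
          have hgB : g < B + 1 := by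
            have hc : g * S = S * g := by ring
            have h4 : g * S < (B + 1) * S := by omega
            exact Nat.lt_of_mul_lt_mul_right h4
          have hmgB : m * (g + 1) ≤ m * (B + 1) := Nat.mul_le_mul_left m hgB
          have e7 : m * (g + 1) = m * g + m := by ring
          omega

theorem stmt_0 (u d s m : ℕ) (hu : 0 < u) (hd : 0 < d) (hs : 1 < s) (hm : 0 < m)
    (hcop : Nat.Coprime s (m * d)) (v : ℕ) (hv : v = u + d)
    (hbig : m * v * (u - 1) ≤ s) :
    ∀ x : ZMod (s + m * d) × ZMod s,
      ∃ h ℓ : ℕ, h < s + m * v ∧ ℓ < s - m * (u - 1) ∧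
        x = h • (((1 : ZMod (s + m * d)), (1 : ZMod s)))
            + ℓ • (((u : ZMod (s + m * d)), (v : ZMod s))) := by
  subst hv
  rintro ⟨X, Y⟩
  haveI : NeZero s := ⟨by omega⟩
  haveI : NeZero (s + m * d) := ⟨by omega⟩
  have hds : Nat.Coprime d s := Nat.Coprime.coprime_dvd_left (dvd_mul_left d m) hcop.symm
  set x := X.val with hxdef
  have hx : x < s + m * d := ZMod.val_lt X
  set tz : ZMod s := (Y - (x : ZMod s)) * (d : ZMod s)⁻¹ with htz
  set t := tz.val with htdef
  have ht : t < s := ZMod.val_lt tz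
  have htd : (x : ZMod s) + (t : ZMod s) * d = Y := by
    have h1 : ((t : ℕ) : ZMod s) = tz := ZMod.natCast_rightInverse tz
    have h2 : (d : ZMod s) * (d : ZMod s)⁻¹ = 1 := ZMod.coe_mul_inv_eq_one d hds
    rw [h1, htz]
    calc (x : ZMod s) + (Y - (x : ZMod s)) * (d : ZMod s)⁻¹ * d
        = (x : ZMod s) + (Y - (x : ZMod s)) * ((d : ZMod s) * (d : ZMod s)⁻¹) := by ring
      _ = Y := by rw [h2]; ring
  obtain ⟨a, T, ℓ, hT, hB, hP2, hP3, hP4⟩ := key u d s m hu hd hs hm hbig x t hx ht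
  refine ⟨x + a * (s + m * (u + d)) - T * u, ℓ, by omega, hP4, ?_⟩
  set h := x + a * (s + m * (u + d)) - T * u with hh
  have hhe : h + T * u = x + a * (s + m * (u + d)) := by omega
  have hBu : ℓ * u + m * a * u = T * u := by rw [← hB]; ring
  have hexp : a * (s + m * (u + d)) = a * (s + m * d) + m * a * u := by ring
  have n1 : h + ℓ * u = x + a * (s + m * d) := by omega
  have hBv : ℓ * (u + d) + m * a * (u + d) = T * (u + d) := by rw [← hB]; ring
  have hexp2 : a * (s + m * (u + d)) = a * s + m * a * (u + d) := by ring
  have hTex : T * (u + d) = T * u + T * d := by ring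
  have n2 : h + ℓ * (u + d) = x + a * s + T * d := by omega
  have hTs : ((T : ℕ) : ZMod s) = ((t : ℕ) : ZMod s) :=
    (ZMod.natCast_eq_natCast_iff T t s).mpr hT
  have cx : ((x : ℕ) : ZMod (s + m * d)) = X := ZMod.natCast_rightInverse X
  have c1 : ((h + ℓ * u : ℕ) : ZMod (s + m * d)) = X := by
    rw [n1, Nat.cast_add, Nat.cast_mul, ZMod.natCast_self, mul_zero, add_zero, cx]
  have c2 : ((h + ℓ * (u + d) : ℕ) : ZMod s) = Y := by
    rw [n2, Nat.cast_add, Nat.cast_add, Nat.cast_mul, Nat.cast_mul, ZMod.natCast_self,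
      mul_zero, add_zero, hTs, ← htd]
  simp only [Prod.smul_mk, Prod.mk_add_mk, Prod.mk.injEq]
  constructor
  · rw [← c1]; push_cast [nsmul_eq_mul]; ring
  · rw [← c2]; push_cast [nsmul_eq_mul]; ring
end

section
/- For every positive integer k and every even degree d ≥ 2, there exists a symmetric subset S of Z_{(⌊d/(2k)⌋·2+1)^k} (i.e., S = −S, 0 ∉ S) of size at most d such that every element of the group is a sum of at most k elements of S. Consequently, CC(d,k) ≥ (2·⌊d/(2k)⌋+1)^k, where CC(d,k) is the largest order of an undirected circulant graph of degree d and diameter k; in particular liminf_{d→∞} CC(d,k)/d^k ≥ 1/k^k. -/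
/-!
Write the elements of `ℤ / r ^ k`, `r = 2m + 1`, in base `r` with balanced digits
`-m ≤ h ≤ m`: every element is then a sum of at most `k` terms `h * r ^ j` with `h ≠ 0`, and
these `2mk` terms form a symmetric set avoiding `0`, because `r ^ k ∣ h * r ^ j` with `j < k`
forces `r ∣ h`. Taking `m = ⌊d / 2k⌋`, so that `2mk ≤ d` and `r > d / k - 1`, gives
`(d / k - 1) ^ k ≤ CC d k`, whence the liminf. The counting bound `n ≤ (d + 1) ^ k` for any
covering set of size `d` is what makes `CC d k` a genuine supremum rather than the junk value
of `sSup` on an unbounded set.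
-/

open Filter

/-- `Z_n` admits a symmetric connection set of size at most `d` (not containing `0`)
such that every element is a sum of at most `k` elements of it. -/
def HasUndirCirc (n d k : ℕ) : Prop :=
  ∃ S : Finset (ZMod n), (0 : ZMod n) ∉ S ∧ (∀ s ∈ S, -s ∈ S) ∧ S.card ≤ d ∧
    ∀ x : ZMod n, ∃ l : List (ZMod n), l.length ≤ k ∧ (∀ a ∈ l, a ∈ S) ∧ l.sum = x

/-- The largest order of an undirected circulant graph of degree at most `d`
and diameter at most `k`. -/
noncomputable def CC (d k : ℕ) : ℕ := sSup {n | HasUndirCirc n d k}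

open Topology Finset
open scoped Pointwise

theorem Int.exists_balanced_digits (m k : ℕ) (z : ℤ) :
    ∃ c : Fin k → ℤ, (∀ j, |c j| ≤ m) ∧
      (2 * m + 1 : ℤ) ^ k ∣ z - ∑ j, c j * (2 * m + 1) ^ (j : ℕ) := by
  induction k generalizing z with
  | zero => exact ⟨Fin.elim0, fun j => j.elim0, by simp⟩
  | succ k ih =>
    have hr : (0 : ℕ) < 2 * m + 1 := by omega
    obtain ⟨z', hz'⟩ : (2 * m + 1 : ℤ) ∣ z - z.bmod (2 * m + 1) := by
      exact_mod_cast Int.dvd_self_sub_bmod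
    obtain ⟨c, hc, hdvd⟩ := ih z'
    have hc₀ : |z.bmod (2 * m + 1)| ≤ m := by
      have := Int.le_bmod (x := z) hr
      have := Int.bmod_le (x := z) hr
      rw [abs_le]
      omega
    refine ⟨Fin.cons (z.bmod (2 * m + 1)) c, fun j => Fin.cases hc₀ hc j, ?_⟩
    have hshift : ∑ j : Fin k, c j * (2 * m + 1 : ℤ) ^ (j + 1 : ℕ) =
        (2 * m + 1) * ∑ j : Fin k, c j * (2 * m + 1) ^ (j : ℕ) := by
      rw [Finset.mul_sum]
      exact Finset.sum_congr rfl fun j _ => by ring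
    rw [Fin.sum_univ_succ]
    simp only [Fin.cons_zero, Fin.cons_succ, Fin.val_zero, Fin.val_succ]
    rw [hshift, pow_succ']
    refine (mul_dvd_mul_left (2 * m + 1 : ℤ) hdvd).trans (dvd_of_eq ?_)
    linear_combination -hz'

theorem List.exists_length_le_sum_eq_sum_ofFn {G : Type*} [AddMonoid G] {S : Set G} {k : ℕ}
    (f : Fin k → G) (hf : ∀ j, f j ≠ 0 → f j ∈ S) :
    ∃ l : List G, l.length ≤ k ∧ (∀ a ∈ l, a ∈ S) ∧ l.sum = (List.ofFn f).sum := by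
  classical
  refine ⟨(List.ofFn f).filter (· != 0), ?_, ?_, List.sum_filter_bne_zero _⟩
  · simpa using List.length_filter_le _ (List.ofFn f)
  · intro a ha
    simp only [List.mem_filter, List.mem_ofFn, bne_iff_ne] at ha
    obtain ⟨⟨j, rfl⟩, hj⟩ := ha
    exact hf j hj

theorem List.sum_mem_nsmul {G : Type*} [AddMonoid G] [DecidableEq G] {s : Finset G}
    {l : List G} (hl : ∀ a ∈ l, a ∈ s) : l.sum ∈ l.length • s := by
  induction l with
  | nil => simp
  | cons a l ih =>
    rw [List.sum_cons, List.length_cons, succ_nsmul']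
    exact Finset.add_mem_add (hl a List.mem_cons_self)
      (ih fun b hb => hl b (List.mem_cons_of_mem a hb))

namespace HasUndirCirc

theorem mono {n d d' k : ℕ} (h : HasUndirCirc n d k) (hd : d ≤ d') : HasUndirCirc n d' k :=
  let ⟨S, h0, hneg, hcard, hcover⟩ := h
  ⟨S, h0, hneg, hcard.trans hd, hcover⟩

theorem le_succ_pow {n d k : ℕ} (h : HasUndirCirc n d k) : n ≤ (d + 1) ^ k := by
  classical
  obtain ⟨S, -, -, hcard, hcover⟩ := h
  have hcovered : (Set.univ : Set (ZMod n)) ⊆ ↑(k • insert 0 S) := by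
    intro x _
    obtain ⟨l, hlen, hl, rfl⟩ := hcover x
    exact nsmul_subset_nsmul (subset_insert 0 S) (mem_insert_self 0 S) hlen
      (List.sum_mem_nsmul hl)
  calc n = (Set.univ : Set (ZMod n)).ncard := by rw [Set.ncard_univ, Nat.card_zmod]
    _ ≤ (k • insert 0 S).card :=
        (Set.ncard_le_ncard hcovered).trans_eq (Set.ncard_coe_finset _)
    _ ≤ (insert 0 S).card ^ k := card_nsmul_le
    _ ≤ (d + 1) ^ k := by gcongr; exact (card_insert_le 0 S).trans (by omega)

end HasUndirCirc

theorem bddAbove_setOf_hasUndirCirc (d k : ℕ) : BddAbove {n | HasUndirCirc n d k} :=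
  ⟨(d + 1) ^ k, fun _ hn => hn.le_succ_pow⟩

theorem HasUndirCirc.le_CC {n d k : ℕ} (h : HasUndirCirc n d k) : n ≤ CC d k :=
  le_csSup (bddAbove_setOf_hasUndirCirc d k) h

theorem CC_le_succ_pow (d k : ℕ) : CC d k ≤ (d + 1) ^ k :=
  csSup_le' fun _ hn => hn.le_succ_pow

section BalancedGenerators

variable {m k : ℕ}

noncomputable def balancedGenerators (m k : ℕ) : Finset (ZMod ((2 * m + 1) ^ k)) :=
  ((Icc (-(m : ℤ)) m).erase 0 ×ˢ range k).image fun p =>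
    (p.1 : ZMod ((2 * m + 1) ^ k)) * (2 * m + 1) ^ p.2

theorem mem_balancedGenerators {a : ZMod ((2 * m + 1) ^ k)} :
    a ∈ balancedGenerators m k ↔
      ∃ h : ℤ, h ≠ 0 ∧ |h| ≤ m ∧
        ∃ j < k, (h : ZMod ((2 * m + 1) ^ k)) * (2 * m + 1) ^ j = a := by
  simp only [balancedGenerators, mem_image, mem_product, mem_erase, mem_Icc, mem_range,
    Prod.exists, abs_le]
  constructor
  · rintro ⟨h, j, ⟨⟨h0, hh⟩, hj⟩, rfl⟩
    exact ⟨h, h0, hh, j, hj, rfl⟩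
  · rintro ⟨h, h0, hh, j, hj, rfl⟩
    exact ⟨h, j, ⟨⟨h0, hh⟩, hj⟩, rfl⟩

theorem intCast_mul_pow_ne_zero {h : ℤ} (h0 : h ≠ 0) (hh : |h| ≤ m) {j : ℕ} (hj : j < k) :
    (h : ZMod ((2 * m + 1) ^ k)) * (2 * m + 1) ^ j ≠ 0 := by
  intro hzero
  have hdvd : (2 * m + 1 : ℤ) ^ k ∣ h * (2 * m + 1) ^ j := by
    have := (ZMod.intCast_zmod_eq_zero_iff_dvd (h * (2 * m + 1) ^ j) ((2 * m + 1) ^ k)).mp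
      (by push_cast; exact hzero)
    exact_mod_cast this
  have hr : (2 * m + 1 : ℤ) ∣ h := by
    have hr0 : (2 * m + 1 : ℤ) ^ j ≠ 0 := pow_ne_zero j (by omega)
    rw [← mul_dvd_mul_iff_right hr0, ← pow_succ']
    exact (pow_dvd_pow _ hj).trans hdvd
  have := Int.le_of_dvd (abs_pos.mpr h0) ((dvd_abs _ _).mpr hr)
  omega

theorem zero_notMem_balancedGenerators : (0 : ZMod _) ∉ balancedGenerators m k := by
  rw [mem_balancedGenerators]
  rintro ⟨h, h0, hh, j, hj, hzero⟩
  exact intCast_mul_pow_ne_zero h0 hh hj hzero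

theorem neg_mem_balancedGenerators {a : ZMod ((2 * m + 1) ^ k)}
    (ha : a ∈ balancedGenerators m k) : -a ∈ balancedGenerators m k := by
  obtain ⟨h, h0, hh, j, hj, rfl⟩ := mem_balancedGenerators.mp ha
  exact mem_balancedGenerators.mpr
    ⟨-h, neg_ne_zero.mpr h0, by rwa [abs_neg], j, hj, by push_cast; ring⟩

theorem card_balancedGenerators_le : (balancedGenerators m k).card ≤ 2 * m * k := by
  calc (balancedGenerators m k).card ≤ ((Icc (-(m : ℤ)) m).erase 0 ×ˢ range k).card :=
        card_image_le
    _ = 2 * m * k := by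
        rw [card_product, card_range, card_erase_of_mem (by simp), Int.card_Icc]
        congr 1
        omega

theorem exists_list_balancedGenerators_sum_eq (x : ZMod ((2 * m + 1) ^ k)) :
    ∃ l : List (ZMod _), l.length ≤ k ∧ (∀ a ∈ l, a ∈ balancedGenerators m k) ∧
      l.sum = x := by
  obtain ⟨z, rfl⟩ := ZMod.intCast_surjective x
  obtain ⟨c, hc, hdvd⟩ := Int.exists_balanced_digits m k z
  obtain ⟨l, hlen, hl, hsum⟩ := List.exists_length_le_sum_eq_sum_ofFn
    (S := balancedGenerators m k)
    (fun j => (c j : ZMod ((2 * m + 1) ^ k)) * (2 * m + 1) ^ (j : ℕ))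
    fun j hj => mem_balancedGenerators.mpr
      ⟨c j, fun h => hj (by simp [h]), hc j, j, j.isLt, rfl⟩
  refine ⟨l, hlen, hl, ?_⟩
  have hcongr := (ZMod.intCast_eq_intCast_iff_dvd_sub (∑ j, c j * (2 * m + 1) ^ (j : ℕ)) z
    ((2 * m + 1) ^ k)).mpr (by exact_mod_cast hdvd)
  push_cast at hcongr
  rw [hsum, List.sum_ofFn, hcongr]

theorem hasUndirCirc_balancedGenerators : HasUndirCirc ((2 * m + 1) ^ k) (2 * m * k) k :=
  ⟨balancedGenerators m k, zero_notMem_balancedGenerators, fun _ => neg_mem_balancedGenerators,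
    card_balancedGenerators_le, exists_list_balancedGenerators_sum_eq⟩

end BalancedGenerators

theorem hasUndirCirc_two_mul_div_add_one_pow (d k : ℕ) :
    HasUndirCirc ((2 * (d / (2 * k)) + 1) ^ k) d k :=
  hasUndirCirc_balancedGenerators.mono <| by
    calc 2 * (d / (2 * k)) * k = d / (2 * k) * (2 * k) := by ring
      _ ≤ d := Nat.div_mul_le_self d (2 * k)

theorem one_div_sub_one_div_pow_le_CC_div_pow {d k : ℕ} (hk : 0 < k) (hkd : k ≤ d) :
    (1 / k - 1 / d : ℝ) ^ k ≤ CC d k / d ^ k := by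
  have hk' : (0 : ℝ) < k := by exact_mod_cast hk
  have hd : (0 : ℝ) < d := by exact_mod_cast hk.trans_le hkd
  have hlt : (d : ℝ) < 2 * k * (d / (2 * k) + 1 : ℕ) := by
    exact_mod_cast Nat.lt_mul_div_succ d (by omega : 0 < 2 * k)
  have hbase : (1 / k - 1 / d : ℝ) * d ≤ (2 * (d / (2 * k)) + 1 : ℕ) := by
    rw [sub_mul, one_div_mul_cancel hd.ne', div_mul_eq_mul_div, one_mul, sub_le_iff_le_add,
      div_le_iff₀ hk']
    push_cast at hlt ⊢
    linarith
  have hnonneg : (0 : ℝ) ≤ 1 / k - 1 / d :=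
    sub_nonneg.mpr (one_div_le_one_div_of_le hk' (by exact_mod_cast hkd))
  rw [le_div_iff₀ (by positivity), ← mul_pow]
  calc ((1 / k - 1 / d : ℝ) * d) ^ k ≤ ((2 * (d / (2 * k)) + 1 : ℕ) : ℝ) ^ k :=
        pow_le_pow_left₀ (by positivity) hbase k
    _ ≤ CC d k := by exact_mod_cast (hasUndirCirc_two_mul_div_add_one_pow d k).le_CC

theorem CC_div_pow_le (k : ℕ) {d : ℕ} (hd : 1 ≤ d) : (CC d k : ℝ) / d ^ k ≤ 2 ^ k := by
  have hd' : (1 : ℝ) ≤ d := by exact_mod_cast hd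
  rw [div_le_iff₀ (by positivity), ← mul_pow]
  calc (CC d k : ℝ) ≤ ((d + 1 : ℕ) : ℝ) ^ k := by exact_mod_cast CC_le_succ_pow d k
    _ ≤ (2 * d) ^ k := by push_cast; gcongr; linarith

theorem stmt_2 (k : ℕ) (hk : 0 < k) :
    (∀ d : ℕ, 2 ≤ d → Even d → HasUndirCirc ((2 * (d / (2 * k)) + 1) ^ k) d k) ∧
    (∀ d : ℕ, 2 ≤ d → Even d → (2 * (d / (2 * k)) + 1) ^ k ≤ CC d k) ∧
    (1 / (k : ℝ) ^ k ≤ atTop.liminf fun d : ℕ => (CC d k : ℝ) / (d : ℝ) ^ k) := by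
  refine ⟨fun d _ _ => hasUndirCirc_two_mul_div_add_one_pow d k,
    fun d _ _ => (hasUndirCirc_two_mul_div_add_one_pow d k).le_CC, ?_⟩
  have hlower :
      Tendsto (fun d : ℕ => (1 / k - 1 / d : ℝ) ^ k) atTop (𝓝 (1 / (k : ℝ) ^ k)) := by
    simpa [one_div_pow] using
      ((tendsto_const_nhds (x := (1 / k : ℝ))).sub tendsto_one_div_atTop_nhds_zero_nat).pow k
  rw [← hlower.liminf_eq]
  refine liminf_le_liminf ?_ hlower.isBoundedUnder_ge ?_
  · filter_upwards [eventually_ge_atTop k] with d hd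
    exact one_div_sub_one_div_pow_le_CC_div_pow hk hd
  · exact isCoboundedUnder_ge_of_eventually_le atTop
      (eventually_ge_atTop 1 |>.mono fun d hd => CC_div_pow_le k hd)
end

section
/- If Cay(Z_{n1}, S1) is a circulant graph of diameter k1 with |S1| = d1 and Cay(Z_{n2}, S2) is a circulant graph of diameter k2 with |S2| = d2, then there exists a subset S of Z_{n1·n2} with |S| ≤ d1 + d2 such that every element of Z_{n1·n2} is a sum of at most k1 + k2 elements of S. (Directed stitching construction: one may take S = n2·S1 ∪ S2, viewing S2 as residues in (−n2/2, n2/2].) -/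
theorem stmt_3 (n1 n2 k1 k2 d1 d2 : ℕ) (hn1 : 0 < n1) (hn2 : 0 < n2)
    (S1 : Finset (ZMod n1)) (S2 : Finset (ZMod n2))
    (h01 : (0 : ZMod n1) ∉ S1) (h02 : (0 : ZMod n2) ∉ S2)
    (hd1 : S1.card = d1) (hd2 : S2.card = d2)
    (hdiam1 : ∀ x : ZMod n1, ∃ l : List (ZMod n1),
      l.length ≤ k1 ∧ (∀ a ∈ l, a ∈ S1) ∧ l.sum = x)
    (hdiam2 : ∀ x : ZMod n2, ∃ l : List (ZMod n2),
      l.length ≤ k2 ∧ (∀ a ∈ l, a ∈ S2) ∧ l.sum = x) :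
    ∃ S : Finset (ZMod (n1 * n2)), S.card ≤ d1 + d2 ∧
      ∀ x : ZMod (n1 * n2), ∃ l : List (ZMod (n1 * n2)),
        l.length ≤ k1 + k2 ∧ (∀ a ∈ l, a ∈ S) ∧ l.sum = x := by
  haveI : NeZero n1 := ⟨hn1.ne'⟩
  haveI : NeZero n2 := ⟨hn2.ne'⟩
  haveI : NeZero (n1 * n2) := ⟨(Nat.mul_pos hn1 hn2).ne'⟩
  -- key mod lemma
  have key : ∀ t : ℕ, ((n2 * (t % n1) : ℕ) : ZMod (n1 * n2)) = ((n2 * t : ℕ) : ZMod (n1 * n2)) := by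
    intro t
    conv_rhs => rw [← Nat.mod_add_div t n1]
    have h0 : ((n1 : ZMod (n1 * n2)) * n2) = 0 := by
      have := ZMod.natCast_self (n1 * n2)
      push_cast at this
      exact this
    push_cast
    linear_combination (-((t / n1 : ℕ) : ZMod (n1 * n2))) * h0
  -- the map m : ZMod n1 → ZMod (n1*n2)
  set m : ZMod n1 → ZMod (n1 * n2) := fun x => ((n2 * x.val : ℕ) : ZMod (n1 * n2)) with hm
  have madd : ∀ a b : ZMod n1, m (a + b) = m a + m b := by
    intro a b
    simp only [hm]
    rw [ZMod.val_add, key, Nat.cast_mul, Nat.cast_add, Nat.cast_mul, Nat.cast_mul]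
    ring
  have mzero : m 0 = 0 := by simp [hm, ZMod.val_zero]
  have msum : ∀ l : List (ZMod n1), (l.map m).sum = m l.sum := by
    intro l
    induction l with
    | nil => simpa using mzero.symm
    | cons a t ih => simp [madd, ih]
  -- lift map for S2
  set ℓ : ZMod n2 → ZMod (n1 * n2) := fun s => ((s.val : ℕ) : ZMod (n1 * n2)) with hℓ
  -- projection
  have hdvd : n2 ∣ n1 * n2 := dvd_mul_left n2 n1
  set π : ZMod (n1 * n2) →+* ZMod n2 := ZMod.castHom hdvd (ZMod n2) with hπ
  have hπnat : ∀ t : ℕ, π ((t : ℕ) : ZMod (n1 * n2)) = (t : ZMod n2) := by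
    intro t; simp [hπ]
  have hπℓ : ∀ s : ZMod n2, π (ℓ s) = s := by
    intro s
    show π ((s.val : ℕ) : ZMod (n1 * n2)) = s
    rw [hπnat, ZMod.natCast_val, ZMod.cast_id]
  refine ⟨S1.image m ∪ S2.image ℓ, ?_, ?_⟩
  · calc (S1.image m ∪ S2.image ℓ).card ≤ (S1.image m).card + (S2.image ℓ).card :=
          Finset.card_union_le _ _
      _ ≤ S1.card + S2.card := Nat.add_le_add (Finset.card_image_le) (Finset.card_image_le)
      _ = d1 + d2 := by rw [hd1, hd2]
  · intro x
    obtain ⟨l2, hl2len, hl2mem, hl2sum⟩ := hdiam2 (π x)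
    set z : ZMod (n1 * n2) := x - (l2.map ℓ).sum with hz
    have hπz : π z = 0 := by
      have : π ((l2.map ℓ).sum) = π x := by
        rw [map_list_sum]
        rw [List.map_map]
        have : (l2.map (π ∘ ℓ)) = l2.map id := List.map_congr_left (fun a _ => hπℓ a)
        rw [this, List.map_id, hl2sum]
      rw [hz, map_sub, this, sub_self]
    -- z.val divisible by n2
    have hdvdval : n2 ∣ z.val := by
      have hzz : ((z.val : ℕ) : ZMod (n1 * n2)) = z := by
        rw [ZMod.natCast_val, ZMod.cast_id]
      have : ((z.val : ℕ) : ZMod n2) = 0 := by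
        rw [← hπnat z.val, hzz, hπz]
      exact (ZMod.natCast_eq_zero_iff _ _).mp this
    obtain ⟨t, ht⟩ := hdvdval
    have hz_eq : z = m ((t : ℕ) : ZMod n1) := by
      have h1 : z = ((n2 * t : ℕ) : ZMod (n1 * n2)) := by
        rw [← ht, ZMod.natCast_val, ZMod.cast_id]
      rw [h1, hm]
      simp only
      rw [ZMod.val_natCast, key]
    obtain ⟨l1, hl1len, hl1mem, hl1sum⟩ := hdiam1 ((t : ℕ) : ZMod n1)
    refine ⟨l1.map m ++ l2.map ℓ, ?_, ?_, ?_⟩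
    · simp only [List.length_append, List.length_map]
      omega
    · intro a ha
      rcases List.mem_append.mp ha with h | h
      · obtain ⟨b, hb, rfl⟩ := List.mem_map.mp h
        exact Finset.mem_union_left _ (Finset.mem_image_of_mem m (hl1mem b hb))
      · obtain ⟨b, hb, rfl⟩ := List.mem_map.mp h
        exact Finset.mem_union_right _ (Finset.mem_image_of_mem ℓ (hl2mem b hb))
    · rw [List.sum_append, msum, hl1sum, ← hz_eq, hz]
      ring
end

section
/- Let G1 and G2 be undirected circulant graphs (Cayley graphs of cyclic groups with symmetric connection sets not containing 0) of diameters k1, k2, orders n1, n2, and degrees d1, d2. If at least one of d1, d2 is even, then there exists an undirected circulant graph of order n1·n2, degree at most d1 + d2, and diameter at most k1 + k2; if both d1 and d2 are odd, degree at most d1 + d2 + 1 suffices. -/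
/-!
Let `φ : ℤ/n₁ → ℤ/n₁n₂`, `a ↦ n₂a`, and let `π : ℤ/n₁n₂ → ℤ/n₂` be reduction, so that
`range φ = ker π`. For any lift `σ` of `π`, every `x` is a sum of at most `k₁ + k₂` elements of
`φ(S₁) ∪ σ(S₂)`: lift a short expression of `π x` and correct the error, which lies in `ker π`,
by a short expression in `φ(S₁)`. Lifting to representatives in `(-n₂/2, n₂/2]` keeps `σ(S₂)`
symmetric, except at the unique element of order two of `ℤ/n₂`, which lies in `S₂` exactly when
`d₂` is odd and then costs one extra generator. If `d₂` is odd but `d₁` is even, exchange the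
roles of the two graphs.
-/

open Finset Pointwise

section CayleyGraph

variable {G : Type*} [AddGroup G]

def IsConnectionSet (S : Finset G) : Prop :=
  (0 : G) ∉ S ∧ ∀ s ∈ S, -s ∈ S

/-- The Cayley graph `Cay(G, S)` has diameter at most `k`. -/
def CayleyDiamLE (S : Finset G) (k : ℕ) : Prop :=
  ∀ x : G, ∃ l : List G, l.length ≤ k ∧ (∀ a ∈ l, a ∈ S) ∧ l.sum = x

variable [DecidableEq G] {H Q : Type*} [AddGroup H] [AddGroup Q]

theorem IsConnectionSet.union {S T : Finset G} (hS : IsConnectionSet S) (hT : IsConnectionSet T) :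
    IsConnectionSet (S ∪ T) := by
  refine ⟨by simp [hS.1, hT.1], fun s hs => ?_⟩
  rcases mem_union.1 hs with h | h
  · exact mem_union_left _ (hS.2 s h)
  · exact mem_union_right _ (hT.2 s h)

theorem IsConnectionSet.image_of_injective {S : Finset H} (hS : IsConnectionSet S) (f : H →+ G)
    (hf : Function.Injective f) : IsConnectionSet (S.image f) := by
  refine ⟨fun h0 => ?_, fun s hs => ?_⟩
  · obtain ⟨a, ha, hfa⟩ := mem_image.1 h0
    exact hS.1 ((injective_iff_map_eq_zero f).1 hf a hfa ▸ ha)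
  · obtain ⟨a, ha, rfl⟩ := mem_image.1 hs
    exact map_neg f a ▸ mem_image_of_mem f (hS.2 a ha)

theorem IsConnectionSet.image_union_neg {S : Finset Q} (hS : IsConnectionSet S) (π : G →+ Q)
    (σ : Q → G) (hσ : Function.RightInverse σ π) :
    IsConnectionSet (S.image σ ∪ -S.image σ) := by
  have hπ : ∀ t ∈ S.image σ ∪ -S.image σ, π t ∈ S := by
    intro t ht
    rcases mem_union.1 ht with h | h
    · obtain ⟨s, hs, rfl⟩ := mem_image.1 h
      rwa [hσ s]
    · obtain ⟨s, hs, hst⟩ := mem_image.1 (mem_neg'.1 h)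
      rw [← neg_neg t, map_neg, ← hst, hσ s]
      exact hS.2 s hs
  refine ⟨fun h0 => hS.1 (map_zero π ▸ hπ 0 h0), fun t ht => ?_⟩
  rcases mem_union.1 ht with h | h
  · exact mem_union_right _ (mem_neg'.2 ((neg_neg t).symm ▸ h))
  · exact mem_union_left _ (mem_neg'.1 h)

theorem card_image_union_neg_image_le [DecidableEq Q] {S : Finset Q} (hS : ∀ s ∈ S, -s ∈ S)
    (σ : Q → G) (hσ : ∀ s, -s ≠ s → σ (-s) = -σ s) :
    #(S.image σ ∪ -S.image σ) ≤ #S + #{s ∈ S | -s = s} := by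
  have hsub : S.image σ ∪ -S.image σ ⊆ S.image σ ∪ {s ∈ S | -s = s}.image (-σ ·) := by
    intro t ht
    rcases mem_union.1 ht with h | h
    · exact mem_union_left _ h
    · obtain ⟨s, hs, hst⟩ := mem_image.1 (mem_neg'.1 h)
      by_cases hself : -s = s
      · exact mem_union_right _
          (mem_image.2 ⟨s, mem_filter.2 ⟨hs, hself⟩, by rw [hst, neg_neg]⟩)
      · exact mem_union_left _ (mem_image.2 ⟨-s, hS s hs, by rw [hσ s hself, hst, neg_neg]⟩)
  calc #(S.image σ ∪ -S.image σ)
      ≤ #(S.image σ ∪ {s ∈ S | -s = s}.image (-σ ·)) := card_le_card hsub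
    _ ≤ #(S.image σ) + #({s ∈ S | -s = s}.image (-σ ·)) := card_union_le _ _
    _ ≤ #S + #{s ∈ S | -s = s} := add_le_add card_image_le card_image_le

theorem CayleyDiamLE.of_extension {S1 : Finset H} {S2 : Finset Q} {T : Finset G} {k1 k2 : ℕ}
    (h1 : CayleyDiamLE S1 k1) (h2 : CayleyDiamLE S2 k2) (φ : H →+ G) (π : G →+ Q)
    (hker : ∀ x, π x = 0 → ∃ a, φ a = x) (σ : Q → G) (hσ : Function.RightInverse σ π)
    (hσT : ∀ s ∈ S2, σ s ∈ T) :
    CayleyDiamLE (S1.image φ ∪ T) (k1 + k2) := by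
  intro x
  obtain ⟨l2, hl2, hl2S, hl2x⟩ := h2 (π x)
  have hlift : π (l2.map σ).sum = π x := by
    rw [map_list_sum, List.map_map, show π ∘ σ = id from funext hσ, List.map_id, hl2x]
  obtain ⟨a, ha⟩ := hker (x - (l2.map σ).sum) (by rw [map_sub, hlift, sub_self])
  obtain ⟨l1, hl1, hl1S, hl1a⟩ := h1 a
  refine ⟨l1.map φ ++ l2.map σ, by simp only [List.length_append, List.length_map]; omega,
    fun b hb => ?_, by rw [List.sum_append, ← map_list_sum, hl1a, ha, sub_add_cancel]⟩
  rcases List.mem_append.1 hb with h | h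
  · obtain ⟨c, hc, rfl⟩ := List.mem_map.1 h
    exact mem_union_left _ (mem_image_of_mem φ (hl1S c hc))
  · obtain ⟨c, hc, rfl⟩ := List.mem_map.1 h
    exact mem_union_right _ (hσT c (hl2S c hc))

end CayleyGraph

/-- Elements of a symmetric set that are not involutions come in pairs `{s, -s}`. -/
theorem Finset.even_card_filter_neg_ne_self {α : Type*} [InvolutiveNeg α] [DecidableEq α]
    {S : Finset α} (hS : ∀ s ∈ S, -s ∈ S) : Even #{s ∈ S | -s ≠ s} := by
  have hprod : ∏ _s ∈ {s ∈ S | -s ≠ s}, (-1 : ℤ) = 1 := by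
    refine prod_involution (fun s _ => -s) (fun _ _ => by norm_num)
      (fun s hs _ => (mem_filter.1 hs).2) (fun s hs => ?_) (fun s _ => neg_neg s)
    obtain ⟨hsS, hs⟩ := mem_filter.1 hs
    exact mem_filter.2 ⟨hS s hsS, by rwa [neg_neg, ne_comm]⟩
  rwa [prod_const, neg_one_pow_eq_one_iff_even (by norm_num)] at hprod

namespace ZMod

variable {n : ℕ}

theorem card_filter_neg_eq_self_le_one {S : Finset (ZMod n)} (h0 : (0 : ZMod n) ∉ S) :
    #{s ∈ S | -s = s} ≤ 1 := by
  have half : ∀ c ∈ S.filter (fun s => -s = s), c ≠ 0 ∧ 2 * c.val = n := fun c hc =>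
    have hc0 : c ≠ 0 := fun h => h0 (h ▸ (mem_filter.1 hc).1)
    ⟨hc0, ((neg_eq_self_iff c).1 (mem_filter.1 hc).2).resolve_left hc0⟩
  refine card_le_one.2 fun a ha b hb => ?_
  obtain ⟨ha0, ha⟩ := half a ha
  obtain ⟨-, hb⟩ := half b hb
  have : NeZero n := ⟨by rintro rfl; exact ha0 ((val_eq_zero a).1 (by omega))⟩
  exact val_injective n (by omega)

theorem card_filter_neg_eq_self {S : Finset (ZMod n)} (hS : IsConnectionSet S) :
    #{s ∈ S | -s = s} = #S % 2 := by
  have hsplit : #{s ∈ S | -s = s} + #{s ∈ S | -s ≠ s} = #S := card_filter_add_card_filter_not _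
  obtain ⟨m, hm⟩ := even_card_filter_neg_ne_self hS.2
  have := card_filter_neg_eq_self_le_one hS.1
  omega

theorem castHom_intCast_valMinAbs {m : ℕ} (h : n ∣ m) (a : ZMod n) :
    castHom h (ZMod n) (a.valMinAbs : ZMod m) = a := by
  rw [map_intCast, coe_valMinAbs]

theorem intCast_valMinAbs_neg {R : Type*} [Ring R] {a : ZMod n} (ha : -a ≠ a) :
    (((-a).valMinAbs : ℤ) : R) = -(a.valMinAbs : R) := by
  rw [valMinAbs_neg_of_ne_half fun h => ha ((neg_eq_self_iff a).2 (Or.inr h)), Int.cast_neg]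

variable (n1 n2 : ℕ)

def scaleHom : ZMod n1 →+ ZMod (n1 * n2) :=
  lift n1 ⟨(AddMonoidHom.mulLeft (n2 : ZMod (n1 * n2))).comp (Int.castAddHom _), by
    simp [← Nat.cast_mul, mul_comm n2 n1]⟩

variable {n1 n2}

theorem scaleHom_intCast (z : ℤ) : scaleHom n1 n2 z = n2 * z :=
  lift_coe _ _ z

theorem scaleHom_injective (hn2 : n2 ≠ 0) : Function.Injective (scaleHom n1 n2) := by
  refine (injective_iff_map_eq_zero _).2 fun a ha => ?_
  obtain ⟨z, rfl⟩ := intCast_surjective a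
  rw [scaleHom_intCast, ← Int.cast_natCast, ← Int.cast_mul, intCast_zmod_eq_zero_iff_dvd,
    Nat.cast_mul, mul_comm (n1 : ℤ)] at ha
  exact (intCast_zmod_eq_zero_iff_dvd z n1).2
    ((mul_dvd_mul_iff_left (Int.natCast_ne_zero.2 hn2)).1 ha)

theorem exists_scaleHom_eq_of_castHom_eq_zero {x : ZMod (n1 * n2)}
    (hx : castHom (dvd_mul_left n2 n1) (ZMod n2) x = 0) : ∃ a, scaleHom n1 n2 a = x := by
  obtain ⟨z, rfl⟩ := intCast_surjective x
  rw [map_intCast, intCast_zmod_eq_zero_iff_dvd] at hx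
  obtain ⟨w, rfl⟩ := hx
  exact ⟨w, by rw [scaleHom_intCast, Int.cast_mul, Int.cast_natCast]⟩

theorem exists_isConnectionSet_mul {n1 n2 k1 k2 : ℕ} (hn2 : n2 ≠ 0)
    {S1 : Finset (ZMod n1)} {S2 : Finset (ZMod n2)} (hS1 : IsConnectionSet S1)
    (hS2 : IsConnectionSet S2) (hk1 : CayleyDiamLE S1 k1) (hk2 : CayleyDiamLE S2 k2) :
    ∃ S : Finset (ZMod (n1 * n2)),
      IsConnectionSet S ∧ #S ≤ #S1 + #S2 + #S2 % 2 ∧ CayleyDiamLE S (k1 + k2) := by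
  let π := castHom (dvd_mul_left n2 n1) (ZMod n2)
  let σ : ZMod n2 → ZMod (n1 * n2) := fun s => s.valMinAbs
  have hσ : Function.RightInverse σ π := castHom_intCast_valMinAbs _
  refine ⟨S1.image (scaleHom n1 n2) ∪ (S2.image σ ∪ -S2.image σ),
    (hS1.image_of_injective _ (scaleHom_injective hn2)).union (hS2.image_union_neg π σ hσ), ?_,
    hk1.of_extension hk2 _ π (fun _ => exists_scaleHom_eq_of_castHom_eq_zero) σ hσ
      fun s hs => mem_union_left _ (mem_image_of_mem σ hs)⟩
  calc _ ≤ #S1 + (#S2 + #{s ∈ S2 | -s = s}) := (card_union_le _ _).trans <|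
        add_le_add card_image_le <|
          card_image_union_neg_image_le hS2.2 σ fun _ hs => intCast_valMinAbs_neg hs
    _ = #S1 + #S2 + #S2 % 2 := by rw [card_filter_neg_eq_self hS2, add_assoc]

end ZMod

theorem stmt_4 (n1 n2 k1 k2 d1 d2 : ℕ) (hn1 : 0 < n1) (hn2 : 0 < n2)
    (S1 : Finset (ZMod n1)) (S2 : Finset (ZMod n2))
    (h01 : (0 : ZMod n1) ∉ S1) (h02 : (0 : ZMod n2) ∉ S2)
    (hsym1 : ∀ s ∈ S1, -s ∈ S1) (hsym2 : ∀ s ∈ S2, -s ∈ S2)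
    (hd1 : S1.card = d1) (hd2 : S2.card = d2)
    (hdiam1 : ∀ x : ZMod n1, ∃ l : List (ZMod n1),
      l.length ≤ k1 ∧ (∀ a ∈ l, a ∈ S1) ∧ l.sum = x)
    (hdiam2 : ∀ x : ZMod n2, ∃ l : List (ZMod n2),
      l.length ≤ k2 ∧ (∀ a ∈ l, a ∈ S2) ∧ l.sum = x) :
    ∃ S : Finset (ZMod (n1 * n2)), (0 : ZMod (n1 * n2)) ∉ S ∧ (∀ s ∈ S, -s ∈ S) ∧
      ((Even d1 ∨ Even d2) → S.card ≤ d1 + d2) ∧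
      (Odd d1 → Odd d2 → S.card ≤ d1 + d2 + 1) ∧
      ∀ x : ZMod (n1 * n2), ∃ l : List (ZMod (n1 * n2)),
        l.length ≤ k1 + k2 ∧ (∀ a ∈ l, a ∈ S) ∧ l.sum = x := by
  subst hd1 hd2
  obtain ⟨S, hS, hcard, hdiam⟩ : ∃ S : Finset (ZMod (n1 * n2)), IsConnectionSet S ∧
      #S ≤ #S1 + #S2 + min (#S1 % 2) (#S2 % 2) ∧ CayleyDiamLE S (k1 + k2) := by
    rcases le_total (#S2 % 2) (#S1 % 2) with h | h
    · obtain ⟨S, hS, hcard, hdiam⟩ := ZMod.exists_isConnectionSet_mul hn2.ne'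
        ⟨h01, hsym1⟩ ⟨h02, hsym2⟩ hdiam1 hdiam2
      exact ⟨S, hS, by omega, hdiam⟩
    · rw [mul_comm n1 n2, add_comm k1 k2]
      obtain ⟨S, hS, hcard, hdiam⟩ := ZMod.exists_isConnectionSet_mul hn1.ne'
        ⟨h02, hsym2⟩ ⟨h01, hsym1⟩ hdiam2 hdiam1
      exact ⟨S, hS, by omega, hdiam⟩
  refine ⟨S, hS.1, hS.2, fun h => ?_, fun h1 h2 => ?_, hdiam⟩
  · rcases h with h | h <;> rw [Nat.even_iff] at h <;> omega
  · rw [Nat.odd_iff] at h1 h2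
    omega
end

section
/- Let q ≥ 7 with q ≡ 1 (mod 6), and let n = 6·q·(q−2). Then there exists a subset S of Z_n with 0 ∉ S and |S| = 4q − 1 such that every element of Z_n is a sum of at most 2 elements of S. Consequently DCC(4q−1, 2) ≥ 6q(q−2) = (3/8)(d+1)(d−7) where d = 4q−1. -/
set_option linter.unusedSectionVars false
set_option linter.unusedVariables false
set_option linter.unnecessarySimpa false

namespace Stmt11Aux

lemma castval {m : ℕ} [NeZero m] (a : ZMod m) : ((a.val : ℕ) : ZMod m) = a := by
  simp [ZMod.natCast_val]

lemma cast_inj_small {m a b : ℕ} (ha : a < m) (hb : b < m)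
    (h : ((a : ℕ) : ZMod m) = ((b : ℕ) : ZMod m)) : a = b := by
  rw [← ZMod.val_cast_of_lt ha, ← ZMod.val_cast_of_lt hb, h]

section defs
variable (q : ℕ)
abbrev R := (ZMod 6 × ZMod q) × ZMod (q - 2)
def myA [NeZero q] : Finset (R q) :=
  ((Finset.univ : Finset (ZMod q)).erase 0).image fun x => ((0, x), 0)
def myB [NeZero (q - 2)] : Finset (R q) :=
  (Finset.univ : Finset (ZMod (q - 2))).image fun y => (((1 : ZMod 6), (0 : ZMod q)), y)
def myC : Finset (R q) :=
  (Finset.range q).image fun x : ℕ => (((2 : ZMod 6), (x : ZMod q)), ((x : ℕ) : ZMod (q - 2)))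
def myD : Finset (R q) :=
  (Finset.range q).image fun x : ℕ => (((4 : ZMod 6), (x : ZMod q)), ((2 * x : ℕ) : ZMod (q - 2)))
def myE : Finset (R q) :=
  {(((2 : ZMod 6), (0 : ZMod q)), (1 : ZMod (q - 2))),
   (((2 : ZMod 6), (0 : ZMod q)), (2 : ZMod (q - 2)))}
def myS [NeZero q] [NeZero (q - 2)] : Finset (R q) :=
  myA q ∪ myB q ∪ myC q ∪ myD q ∪ myE q
end defs

section lemmas
variable (q : ℕ) [NeZero q] [NeZero (q - 2)]

lemma zdisj {z w : ZMod 6} (hzw : z ≠ w) {s t : Finset (R q)}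
    (hs : ∀ x ∈ s, x.1.1 = z) (ht : ∀ x ∈ t, x.1.1 = w) : Disjoint s t := by
  rw [Finset.disjoint_left]
  intro x hx hx'
  exact hzw (((hs x hx).symm).trans (ht x hx'))

lemma zA : ∀ x ∈ myA q, x.1.1 = 0 := by
  intro x hx; simp only [myA, Finset.mem_image] at hx; obtain ⟨u, _, rfl⟩ := hx; rfl
lemma zB : ∀ x ∈ myB q, x.1.1 = 1 := by
  intro x hx; simp only [myB, Finset.mem_image] at hx; obtain ⟨u, _, rfl⟩ := hx; rfl
lemma zC : ∀ x ∈ myC q, x.1.1 = 2 := by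
  intro x hx; simp only [myC, Finset.mem_image] at hx; obtain ⟨u, _, rfl⟩ := hx; rfl
lemma zD : ∀ x ∈ myD q, x.1.1 = 4 := by
  intro x hx; simp only [myD, Finset.mem_image] at hx; obtain ⟨u, _, rfl⟩ := hx; rfl
lemma zE : ∀ x ∈ myE q, x.1.1 = 2 := by
  intro x hx; simp only [myE, Finset.mem_insert, Finset.mem_singleton] at hx
  rcases hx with rfl | rfl <;> rfl

lemma dCE (hq : 7 ≤ q) : Disjoint (myC q) (myE q) := by
  rw [Finset.disjoint_left]
  intro x hx hx'
  simp only [myC, Finset.mem_image, Finset.mem_range] at hx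
  obtain ⟨u, hu, rfl⟩ := hx
  simp only [myE, Finset.mem_insert, Finset.mem_singleton, Prod.mk.injEq] at hx'
  have hu0 : u = 0 := by
    rcases hx' with ⟨⟨_, h⟩, _⟩ | ⟨⟨_, h⟩, _⟩ <;>
      exact cast_inj_small hu (by omega) (by rw [h]; simp)
  subst hu0
  rcases hx' with ⟨_, h⟩ | ⟨_, h⟩
  · have := cast_inj_small (show 0 < q - 2 by omega) (show 1 < q - 2 by omega) (by simpa using h)
    omega
  · have := cast_inj_small (show 0 < q - 2 by omega) (show 2 < q - 2 by omega) (by simpa using h)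
    omega

lemma card_myS (hq : 7 ≤ q) : (myS q).card = 4 * q - 1 := by
  have hA : (myA q).card = q - 1 := by
    rw [myA, Finset.card_image_of_injective _
      (fun a b h => by simpa using congrArg (fun p => p.1.2) h),
      Finset.card_erase_of_mem (Finset.mem_univ _), Finset.card_univ, ZMod.card]
  have hB : (myB q).card = q - 2 := by
    rw [myB, Finset.card_image_of_injective _
      (fun a b h => by simpa using congrArg (fun p => p.2) h),
      Finset.card_univ, ZMod.card]
  have hC : (myC q).card = q := by
    rw [myC, Finset.card_image_of_injOn (fun a ha b hb h => by
      simp only [Finset.coe_range, Set.mem_Iio] at ha hb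
      exact cast_inj_small ha hb (congrArg (fun p => p.1.2) h)), Finset.card_range]
  have hD : (myD q).card = q := by
    rw [myD, Finset.card_image_of_injOn (fun a ha b hb h => by
      simp only [Finset.coe_range, Set.mem_Iio] at ha hb
      exact cast_inj_small ha hb (congrArg (fun p => p.1.2) h)), Finset.card_range]
  have h12 : ((((2 : ZMod 6), (0 : ZMod q)), (1 : ZMod (q - 2))) : R q) ≠
      (((2 : ZMod 6), (0 : ZMod q)), (2 : ZMod (q - 2))) := by
    intro h
    have h2 := congrArg (fun p : R q => p.2) h
    simp only at h2
    have : (1 : ℕ) = 2 := cast_inj_small (show 1 < q - 2 by omega) (show 2 < q - 2 by omega)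
      (by simpa using h2)
    omega
  have hE : (myE q).card = 2 := by
    rw [myE, Finset.card_insert_of_notMem (by simpa using h12), Finset.card_singleton]
  have d1 : Disjoint (myA q) (myB q) := zdisj q (by decide) (zA q) (zB q)
  have d2 : Disjoint (myA q ∪ myB q) (myC q) :=
    Finset.disjoint_union_left.2 ⟨zdisj q (by decide) (zA q) (zC q),
      zdisj q (by decide) (zB q) (zC q)⟩
  have d3 : Disjoint (myA q ∪ myB q ∪ myC q) (myD q) :=
    Finset.disjoint_union_left.2 ⟨Finset.disjoint_union_left.2
      ⟨zdisj q (by decide) (zA q) (zD q), zdisj q (by decide) (zB q) (zD q)⟩,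
      zdisj q (by decide) (zC q) (zD q)⟩
  have d4 : Disjoint (myA q ∪ myB q ∪ myC q ∪ myD q) (myE q) :=
    Finset.disjoint_union_left.2 ⟨Finset.disjoint_union_left.2 ⟨Finset.disjoint_union_left.2
      ⟨zdisj q (by decide) (zA q) (zE q), zdisj q (by decide) (zB q) (zE q)⟩,
      dCE q hq⟩, zdisj q (by decide) (zD q) (zE q)⟩
  rw [myS, Finset.card_union_of_disjoint d4, Finset.card_union_of_disjoint d3,
    Finset.card_union_of_disjoint d2, Finset.card_union_of_disjoint d1, hA, hB, hC, hD, hE]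
  omega

lemma zero_notMem_myS (hq : 7 ≤ q) : (0 : R q) ∉ myS q := by
  intro h
  have hz : (0 : R q).1.1 = 0 := rfl
  simp only [myS, Finset.mem_union] at h
  rcases h with (((h | h) | h) | h) | h
  · simp only [myA, Finset.mem_image, Finset.mem_erase] at h
    obtain ⟨u, ⟨hu, _⟩, h⟩ := h
    apply hu
    have := congrArg (fun p : R q => p.1.2) h
    simpa using this
  · exact absurd ((zB q _ h).symm.trans hz) (by decide)
  · exact absurd ((zC q _ h).symm.trans hz) (by decide)
  · exact absurd ((zD q _ h).symm.trans hz) (by decide)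
  · exact absurd ((zE q _ h).symm.trans hz) (by decide)
end lemmas

section cover
variable (q : ℕ) [NeZero q] [NeZero (q - 2)]
variable (S : Finset ((ZMod 6 × ZMod q) × ZMod (q-2)))
variable (memA' : ∀ {x : ZMod q}, x ≠ 0 → (((0 : ZMod 6), x), (0 : ZMod (q-2))) ∈ S)
variable (memB' : ∀ y : ZMod (q - 2), (((1 : ZMod 6), (0 : ZMod q)), y) ∈ S)
variable (memC' : ∀ {x : ℕ}, x < q → (((2 : ZMod 6), (x : ZMod q)), ((x : ℕ) : ZMod (q-2))) ∈ S)
variable (memD' : ∀ {x : ℕ}, x < q → (((4 : ZMod 6), (x : ZMod q)), ((2 * x : ℕ) : ZMod (q-2))) ∈ S)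
variable (memE1' : (((2 : ZMod 6), (0 : ZMod q)), (1 : ZMod (q-2))) ∈ S)
variable (memE2' : (((2 : ZMod 6), (0 : ZMod q)), (2 : ZMod (q-2))) ∈ S)

include memA' memB' memC' memD' memE1' memE2' in
lemma coverage (hq : 7 ≤ q) (hmod : q % 6 = 1) :
    ∀ r : (ZMod 6 × ZMod q) × ZMod (q-2), ∃ l : List ((ZMod 6 × ZMod q) × ZMod (q-2)),
      l.length ≤ 2 ∧ (∀ a ∈ l, a ∈ S) ∧ l.sum = r := by
  have hq2 : 5 ≤ q - 2 := by omega
  rintro ⟨⟨c, a⟩, b⟩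
  have h6 : ∀ z : ZMod 6, z = 0 ∨ z = 1 ∨ z = 2 ∨ z = 3 ∨ z = 4 ∨ z = 5 := by decide
  have hav : a.val < q := ZMod.val_lt a
  have hbv : b.val < q - 2 := ZMod.val_lt b
  have hca : ((a.val : ℕ) : ZMod q) = a := castval a
  have hcb : ((b.val : ℕ) : ZMod (q-2)) = b := castval b
  rcases h6 c with rfl | rfl | rfl | rfl | rfl | rfl
  · -- c = 0 : hard case
    set av := a.val with hav_def
    set bv := b.val with hbv_def
    set t := (bv + 2 * (q - 2) - av) % (q - 2) with ht
    have htlt : t < q - 2 := Nat.mod_lt _ (by omega)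
    have htcast : ((t : ℕ) : ZMod (q-2)) = b - ((av : ℕ) : ZMod (q-2)) := by
      have hm : (((q - 2 : ℕ)) : ZMod (q-2)) = 0 := ZMod.natCast_self _
      rw [ht, ZMod.natCast_mod, Nat.cast_sub (by omega), Nat.cast_add, Nat.cast_mul, hm, hcb]
      ring
    rcases le_or_gt t av with h1 | h1
    · -- case 1 : x = av - t, y = t
      refine ⟨[(((2 : ZMod 6), ((av - t : ℕ) : ZMod q)), ((av - t : ℕ) : ZMod (q-2))),
               (((4 : ZMod 6), ((t : ℕ) : ZMod q)), ((2 * t : ℕ) : ZMod (q-2)))], by simp, ?_, ?_⟩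
      · intro x hx
        simp only [List.mem_cons, List.not_mem_nil, or_false] at hx
        rcases hx with rfl | rfl
        · exact memC' (by omega)
        · exact memD' (by omega)
      · simp only [List.sum_cons, List.sum_nil, add_zero, Prod.mk_add_mk]
        simp only [Prod.mk.injEq]
        refine ⟨⟨show (2+4 : ZMod 6) = 0 by decide, ?_⟩, ?_⟩
        · show ((av - t : ℕ) : ZMod q) + ((t : ℕ) : ZMod q) = a
          rw [← Nat.cast_add, show av - t + t = av by omega, hca]
        · show ((av - t : ℕ) : ZMod (q-2)) + ((2 * t : ℕ) : ZMod (q-2)) = b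
          rw [← Nat.cast_add, show av - t + 2 * t = av + t by omega, Nat.cast_add, htcast]
          ring
    · rcases eq_or_lt_of_le (show av + 1 ≤ t by omega) with h2 | h2
      · -- case 2 : t = av + 1, use E1 + D(av)
        refine ⟨[(((2 : ZMod 6), (0 : ZMod q)), (1 : ZMod (q-2))),
                 (((4 : ZMod 6), ((av : ℕ) : ZMod q)), ((2 * av : ℕ) : ZMod (q-2)))], by simp, ?_, ?_⟩
        · intro x hx
          simp only [List.mem_cons, List.not_mem_nil, or_false] at hx
          rcases hx with rfl | rfl
          · exact memE1'
          · exact memD' (by omega)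
        · simp only [List.sum_cons, List.sum_nil, add_zero, Prod.mk_add_mk]
          simp only [Prod.mk.injEq]
          refine ⟨⟨show (2+4 : ZMod 6) = 0 by decide, by simp [hca]⟩, ?_⟩
          show (1 : ZMod (q-2)) + ((2 * av : ℕ) : ZMod (q-2)) = b
          have : b = ((av : ℕ) : ZMod (q-2)) + ((t : ℕ) : ZMod (q-2)) := by rw [htcast]; ring
          rw [this, ← h2]
          push_cast
          ring
      · rcases eq_or_lt_of_le (show av + 2 ≤ t by omega) with h3 | h3
        · -- case 3 : t = av + 2, use E2 + D(av)
          refine ⟨[(((2 : ZMod 6), (0 : ZMod q)), (2 : ZMod (q-2))),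
                   (((4 : ZMod 6), ((av : ℕ) : ZMod q)), ((2 * av : ℕ) : ZMod (q-2)))], by simp, ?_, ?_⟩
          · intro x hx
            simp only [List.mem_cons, List.not_mem_nil, or_false] at hx
            rcases hx with rfl | rfl
            · exact memE2'
            · exact memD' (by omega)
          · simp only [List.sum_cons, List.sum_nil, add_zero, Prod.mk_add_mk]
            simp only [Prod.mk.injEq]
            refine ⟨⟨show (2+4 : ZMod 6) = 0 by decide, by simp [hca]⟩, ?_⟩
            show (2 : ZMod (q-2)) + ((2 * av : ℕ) : ZMod (q-2)) = b
            have : b = ((av : ℕ) : ZMod (q-2)) + ((t : ℕ) : ZMod (q-2)) := by rw [htcast]; ring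
            rw [this, ← h3]
            push_cast
            ring
        · -- case 4 : t ≥ av + 3 : x = av + q + 2 - t, y = t - 2
          refine ⟨[(((2 : ZMod 6), ((av + q + 2 - t : ℕ) : ZMod q)), ((av + q + 2 - t : ℕ) : ZMod (q-2))),
                   (((4 : ZMod 6), ((t - 2 : ℕ) : ZMod q)), ((2 * (t - 2) : ℕ) : ZMod (q-2)))],
              by simp, ?_, ?_⟩
          · intro x hx
            simp only [List.mem_cons, List.not_mem_nil, or_false] at hx
            rcases hx with rfl | rfl
            · exact memC' (by omega)
            · exact memD' (by omega)
          · simp only [List.sum_cons, List.sum_nil, add_zero, Prod.mk_add_mk]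
            simp only [Prod.mk.injEq]
            refine ⟨⟨show (2+4 : ZMod 6) = 0 by decide, ?_⟩, ?_⟩
            · show ((av + q + 2 - t : ℕ) : ZMod q) + ((t - 2 : ℕ) : ZMod q) = a
              rw [← Nat.cast_add, show av + q + 2 - t + (t - 2) = av + q by omega, Nat.cast_add,
                ZMod.natCast_self, add_zero, hca]
            · show ((av + q + 2 - t : ℕ) : ZMod (q-2)) + ((2 * (t - 2) : ℕ) : ZMod (q-2)) = b
              rw [← Nat.cast_add, show av + q + 2 - t + 2 * (t - 2) = av + t + (q - 2) by omega,
                Nat.cast_add, Nat.cast_add, ZMod.natCast_self, add_zero, htcast]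
              ring
  · -- c = 1
    by_cases ha : a = 0
    · exact ⟨[(((1 : ZMod 6), (0 : ZMod q)), b)], by simp, by
        intro x hx; simp only [List.mem_cons, List.not_mem_nil, or_false] at hx
        subst hx; exact memB' b, by subst ha; simp⟩
    · refine ⟨[(((0 : ZMod 6), a), (0 : ZMod (q-2))), (((1 : ZMod 6), (0 : ZMod q)), b)],
        by simp, ?_, ?_⟩
      · intro x hx
        simp only [List.mem_cons, List.not_mem_nil, or_false] at hx
        rcases hx with rfl | rfl
        · exact memA' ha
        · exact memB' b
      · simp
  · -- c = 2 : use C(bv) (+ A)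
    have hblt : b.val < q := by omega
    by_cases ha : a = ((b.val : ℕ) : ZMod q)
    · refine ⟨[(((2 : ZMod 6), ((b.val : ℕ) : ZMod q)), ((b.val : ℕ) : ZMod (q-2)))], by simp, ?_, ?_⟩
      · intro x hx; simp only [List.mem_cons, List.not_mem_nil, or_false] at hx
        subst hx; exact memC' hblt
      · simp [ha, hcb]
    · refine ⟨[(((2 : ZMod 6), ((b.val : ℕ) : ZMod q)), ((b.val : ℕ) : ZMod (q-2))),
               (((0 : ZMod 6), a - ((b.val : ℕ) : ZMod q)), (0 : ZMod (q-2)))], by simp, ?_, ?_⟩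
      · intro x hx
        simp only [List.mem_cons, List.not_mem_nil, or_false] at hx
        rcases hx with rfl | rfl
        · exact memC' hblt
        · exact memA' (sub_ne_zero.2 (Ne.symm (fun h => ha h.symm)))
      · simp only [List.sum_cons, List.sum_nil, add_zero, Prod.mk_add_mk]
        simp only [Prod.mk.injEq]
        exact ⟨⟨trivial, by ring⟩, by simp [hcb]⟩
  · -- c = 3 : C(av) + B
    refine ⟨[(((2 : ZMod 6), ((a.val : ℕ) : ZMod q)), ((a.val : ℕ) : ZMod (q-2))),
             (((1 : ZMod 6), (0 : ZMod q)), b - ((a.val : ℕ) : ZMod (q-2)))], by simp, ?_, ?_⟩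
    · intro x hx
      simp only [List.mem_cons, List.not_mem_nil, or_false] at hx
      rcases hx with rfl | rfl
      · exact memC' hav
      · exact memB' _
    · simp only [List.sum_cons, List.sum_nil, add_zero, Prod.mk_add_mk]
      simp only [Prod.mk.injEq]
      exact ⟨⟨show (2+1 : ZMod 6) = 3 by decide, by simp [hca]⟩, by ring⟩
  · -- c = 4 : use D(x) with x = bv * ((q-1)/2) % (q-2)  (+ A)
    set x := (b.val * ((q - 1) / 2)) % (q - 2) with hx
    have hxlt : x < q := lt_of_lt_of_le (Nat.mod_lt _ (by omega)) (by omega)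
    have hDb : ((2 * x : ℕ) : ZMod (q-2)) = b := by
      have h2x : ((2 * x : ℕ) : ZMod (q-2)) = ((2 * (b.val * ((q-1)/2)) : ℕ) : ZMod (q-2)) := by
        rw [hx]
        push_cast [ZMod.natCast_mod]
        ring
      rw [h2x, show 2 * (b.val * ((q-1)/2)) = b.val * (2 * ((q-1)/2)) by ring,
        show 2 * ((q-1)/2) = q - 1 by omega, show q - 1 = (q - 2) + 1 by omega]
      push_cast [ZMod.natCast_self]
      simp [hcb]
    by_cases ha : a = ((x : ℕ) : ZMod q)
    · refine ⟨[(((4 : ZMod 6), ((x : ℕ) : ZMod q)), ((2 * x : ℕ) : ZMod (q-2)))], by simp, ?_, ?_⟩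
      · intro y hy; simp only [List.mem_cons, List.not_mem_nil, or_false] at hy
        subst hy; exact memD' hxlt
      · simp [ha, hDb]
    · refine ⟨[(((4 : ZMod 6), ((x : ℕ) : ZMod q)), ((2 * x : ℕ) : ZMod (q-2))),
               (((0 : ZMod 6), a - ((x : ℕ) : ZMod q)), (0 : ZMod (q-2)))], by simp, ?_, ?_⟩
      · intro y hy
        simp only [List.mem_cons, List.not_mem_nil, or_false] at hy
        rcases hy with rfl | rfl
        · exact memD' hxlt
        · exact memA' (sub_ne_zero.2 (Ne.symm (fun h => ha h.symm)))
      · simp only [List.sum_cons, List.sum_nil, add_zero, Prod.mk_add_mk]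
        simp only [Prod.mk.injEq]
        exact ⟨⟨trivial, by ring⟩, by simp [hDb]⟩
  · -- c = 5 : D(av) + B
    refine ⟨[(((4 : ZMod 6), ((a.val : ℕ) : ZMod q)), ((2 * a.val : ℕ) : ZMod (q-2))),
             (((1 : ZMod 6), (0 : ZMod q)), b - ((2 * a.val : ℕ) : ZMod (q-2)))], by simp, ?_, ?_⟩
    · intro x hx
      simp only [List.mem_cons, List.not_mem_nil, or_false] at hx
      rcases hx with rfl | rfl
      · exact memD' hav
      · exact memB' _
    · simp only [List.sum_cons, List.sum_nil, add_zero, Prod.mk_add_mk]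
      simp only [Prod.mk.injEq]
      exact ⟨⟨show (4+1 : ZMod 6) = 5 by decide, by simp [hca]⟩, by ring⟩

end cover

section memlems
variable (q : ℕ) [NeZero q] [NeZero (q - 2)]

lemma memA {x : ZMod q} (hx : x ≠ 0) : (((0 : ZMod 6), x), (0 : ZMod (q-2))) ∈ myS q := by
  simp only [myS, Finset.mem_union, myA, Finset.mem_image]
  exact Or.inl (Or.inl (Or.inl (Or.inl ⟨x, Finset.mem_erase.2 ⟨hx, Finset.mem_univ x⟩, rfl⟩)))

lemma memB (y : ZMod (q - 2)) : (((1 : ZMod 6), (0 : ZMod q)), y) ∈ myS q := by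
  simp only [myS, Finset.mem_union, myB, Finset.mem_image]
  exact Or.inl (Or.inl (Or.inl (Or.inr ⟨y, Finset.mem_univ y, rfl⟩)))

lemma memC {x : ℕ} (hx : x < q) :
    (((2 : ZMod 6), (x : ZMod q)), ((x : ℕ) : ZMod (q-2))) ∈ myS q := by
  simp only [myS, Finset.mem_union, myC, Finset.mem_image]
  exact Or.inl (Or.inl (Or.inr ⟨x, Finset.mem_range.2 hx, rfl⟩))

lemma memD {x : ℕ} (hx : x < q) :
    (((4 : ZMod 6), (x : ZMod q)), ((2 * x : ℕ) : ZMod (q-2))) ∈ myS q := by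
  simp only [myS, Finset.mem_union, myD, Finset.mem_image]
  exact Or.inl (Or.inr ⟨x, Finset.mem_range.2 hx, rfl⟩)

lemma memE1 : (((2 : ZMod 6), (0 : ZMod q)), (1 : ZMod (q-2))) ∈ myS q := by
  simp [myS, myE]

lemma memE2 : (((2 : ZMod 6), (0 : ZMod q)), (2 : ZMod (q-2))) ∈ myS q := by
  simp [myS, myE]


end memlems

end Stmt11Aux

/-- `Z_n` admits a connection set of size exactly `d` (not containing `0`)
such that every element is a sum of at most `k` elements of it. -/
def HasDirCirc (n d k : ℕ) : Prop :=
  ∃ S : Finset (ZMod n), (0 : ZMod n) ∉ S ∧ S.card = d ∧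
    ∀ x : ZMod n, ∃ l : List (ZMod n), l.length ≤ k ∧ (∀ a ∈ l, a ∈ S) ∧ l.sum = x

/-- The largest order of a directed circulant graph of degree `d` and diameter at most `k`. -/
noncomputable def DCC (d k : ℕ) : ℕ := sSup {n | HasDirCirc n d k}

namespace Stmt11Aux

lemma transfer {M N : Type*} [AddCommMonoid M] [AddCommMonoid N] [DecidableEq M]
    (e : M ≃+ N) {d k : ℕ} (S : Finset N) (h0 : (0 : N) ∉ S) (hc : S.card = d)
    (hcov : ∀ x : N, ∃ l : List N, l.length ≤ k ∧ (∀ a ∈ l, a ∈ S) ∧ l.sum = x) :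
    ∃ T : Finset M, (0 : M) ∉ T ∧ T.card = d ∧
      ∀ x : M, ∃ l : List M, l.length ≤ k ∧ (∀ a ∈ l, a ∈ T) ∧ l.sum = x := by
  refine ⟨S.image e.symm, ?_, ?_, ?_⟩
  · intro h
    rw [Finset.mem_image] at h
    obtain ⟨y, hy, hxy⟩ := h
    have : y = 0 := by
      have := congrArg e hxy
      simpa using this
    exact h0 (this ▸ hy)
  · rw [Finset.card_image_of_injective _ e.symm.injective, hc]
  · intro x
    obtain ⟨l, hl, hm, hs⟩ := hcov (e x)
    refine ⟨l.map e.symm, by simpa using hl, ?_, ?_⟩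
    · intro a ha
      rw [List.mem_map] at ha
      obtain ⟨b, hb, rfl⟩ := ha
      exact Finset.mem_image_of_mem _ (hm b hb)
    · have h2 := (map_list_sum e.symm.toAddMonoidHom l).symm
      simp only [AddEquiv.coe_toAddMonoidHom] at h2
      rw [h2, hs]
      simp

lemma hasDirCirc_le {n d : ℕ} (h : HasDirCirc n d 2) : n ≤ 1 + d + d * d := by
  classical
  obtain ⟨S, h0, hcard, hcov⟩ := h
  set T : Finset (ZMod n) :=
    insert 0 (S ∪ (S ×ˢ S).image fun p : ZMod n × ZMod n => p.1 + p.2) with hT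
  have hall : ∀ x : ZMod n, x ∈ T := by
    intro x
    obtain ⟨l, hl, hm, hs⟩ := hcov x
    match l, hl with
    | [], _ =>
      simp only [List.sum_nil] at hs
      simp [hT, ← hs]
    | [a], _ =>
      simp only [List.sum_cons, List.sum_nil, add_zero] at hs
      subst hs
      simp only [hT, Finset.mem_insert, Finset.mem_union]
      exact Or.inr (Or.inl (hm a (by simp)))
    | [a, b], _ =>
      simp only [List.sum_cons, List.sum_nil, add_zero] at hs
      subst hs
      simp only [hT, Finset.mem_insert, Finset.mem_union, Finset.mem_image]
      exact Or.inr (Or.inr ⟨(a, b), Finset.mk_mem_product (hm a (by simp)) (hm b (by simp)), rfl⟩)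
    | a :: b :: c :: l', hl => simp at hl
  have hTcard : T.card ≤ 1 + d + d * d := by
    calc T.card ≤ (S ∪ (S ×ˢ S).image fun p : ZMod n × ZMod n => p.1 + p.2).card + 1 :=
          Finset.card_insert_le _ _
    _ ≤ (S.card + ((S ×ˢ S).image fun p : ZMod n × ZMod n => p.1 + p.2).card) + 1 := by
          gcongr; exact Finset.card_union_le _ _
    _ ≤ (d + d * d) + 1 := by
          gcongr
          · exact le_of_eq hcard
          · calc ((S ×ˢ S).image fun p : ZMod n × ZMod n => p.1 + p.2).card ≤ (S ×ˢ S).card :=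
                  Finset.card_image_le
              _ = d * d := by rw [Finset.card_product, hcard]
    _ = 1 + d + d * d := by omega
  rcases n with _ | m
  · exfalso
    have hfin : (Set.univ : Set (ZMod 0)).Finite :=
      Set.Finite.subset T.finite_toSet (fun x _ => hall x)
    have hf : Finite (ZMod 0) := Set.finite_univ_iff.mp hfin
    have hi : Infinite (ZMod 0) := inferInstanceAs (Infinite ℤ)
    exact absurd hf (by exact hi.not_finite)
  · haveI : NeZero (m + 1) := ⟨m.succ_ne_zero⟩
    calc m + 1 = Fintype.card (ZMod (m + 1)) := (ZMod.card _).symm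
      _ = Finset.univ.card := Finset.card_univ.symm
      _ ≤ T.card := Finset.card_le_card (fun x _ => hall x)
      _ ≤ 1 + d + d * d := hTcard


end Stmt11Aux

open Stmt11Aux in
theorem stmt_11 (q : ℕ) (hq : 7 ≤ q) (hmod : q % 6 = 1) :
    (∃ S : Finset (ZMod (6 * q * (q - 2))), (0 : ZMod (6 * q * (q - 2))) ∉ S ∧
      S.card = 4 * q - 1 ∧
      ∀ x : ZMod (6 * q * (q - 2)), ∃ l : List (ZMod (6 * q * (q - 2))),
        l.length ≤ 2 ∧ (∀ a ∈ l, a ∈ S) ∧ l.sum = x) ∧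
    6 * q * (q - 2) ≤ DCC (4 * q - 1) 2 := by
  haveI : NeZero q := ⟨by omega⟩
  haveI : NeZero (q - 2) := ⟨by omega⟩
  have hc6q : Nat.Coprime 6 q := by
    rw [Nat.Coprime, Nat.gcd_rec, hmod]
    simp
  have hc6q2 : Nat.Coprime 6 (q - 2) := by
    rw [Nat.Coprime, Nat.gcd_rec, show (q - 2) % 6 = 5 by omega]
    decide
  have hcqq2 : Nat.Coprime q (q - 2) := by
    rw [Nat.Coprime, Nat.gcd_comm, Nat.gcd_rec]
    have hmq : q % (q - 2) = 2 := by
      obtain ⟨m, hm⟩ : ∃ m, m = q - 2 := ⟨_, rfl⟩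
      rw [← hm, show q = m + 2 by omega, Nat.add_mod_left]
      exact Nat.mod_eq_of_lt (by omega)
    rw [hmq, Nat.gcd_rec, show (q - 2) % 2 = 1 by omega]
    simp
  have h1 : Nat.Coprime (6 * q) (q - 2) := Nat.Coprime.mul hc6q2 hcqq2
  have e1 : ZMod (6 * q * (q - 2)) ≃+* ZMod (6 * q) × ZMod (q - 2) := ZMod.chineseRemainder h1
  have e2 : ZMod (6 * q) ≃+* ZMod 6 × ZMod q := ZMod.chineseRemainder hc6q
  have e : ZMod (6 * q * (q - 2)) ≃+ (ZMod 6 × ZMod q) × ZMod (q - 2) :=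
    e1.toAddEquiv.trans (e2.toAddEquiv.prodCongr (AddEquiv.refl (ZMod (q - 2))))
  obtain ⟨T, hT0, hTcard, hTcov⟩ :=
    transfer e (myS q) (zero_notMem_myS q hq) (card_myS q hq)
      (coverage q (myS q) (memA q) (memB q) (memC q) (memD q) (memE1 q) (memE2 q) hq hmod)
  refine ⟨⟨T, hT0, hTcard, hTcov⟩, ?_⟩
  exact le_csSup ⟨1 + (4 * q - 1) + (4 * q - 1) * (4 * q - 1), fun n hn => hasDirCirc_le hn⟩
    ⟨T, hT0, hTcard, hTcov⟩
end
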